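/- Let x ∈ ℝ^N, let T₀ be the support of the best K-term approximation x_K of x, and let h ∈ ℝ^N satisfy ‖x + h‖₁ ≤ ‖x‖₁. Partition the complement of T₀ into sets T₁, T₂, … of size K ordered by decreasing magnitude of |hᵢ|. Then Σ_{k≥2} ‖h_{T_k}‖₂ ≤ ‖h_{T₀∪T₁}‖₂ + 2 e₀(K), where e₀(K) = K^(-1/2) ‖x - x_K‖₁. -/

import Mathlib

open Finset

/-- Cone-constraint lemma (Candès): with `T₀` the support of the best `K`-term
approximation of `x`, `‖x + h‖₁ ≤ ‖x‖₁`, and `T₁, T₂, …` a partition of `T₀ᶜ`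
into sets of size `K` ordered by decreasing magnitude of `|hᵢ|`, we have
`Σ_{k≥2} ‖h_{T_k}‖₂ ≤ ‖h_{T₀∪T₁}‖₂ + 2 e₀(K)` with `e₀(K) = K^{-1/2} ‖x - x_K‖₁`. -/
theorem cone_constraint_tail_bound (N K L : ℕ) (hK : 1 ≤ K)
    (x h : Fin N → ℝ) (T : ℕ → Finset (Fin N))
    (hT0card : (T 0).card = K)
    (hbest : ∀ i ∈ T 0, ∀ j ∉ T 0, |x j| ≤ |x i|)
    (hl1 : ∑ i, |x i + h i| ≤ ∑ i, |x i|)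
    (hdisj : ∀ k k' : ℕ, k ≠ k' → Disjoint (T k) (T k'))
    (hcard : ∀ k : ℕ, 1 ≤ k → k ≤ L → (T k).card = K)
    (hempty : ∀ k : ℕ, L < k → T k = ∅)
    (hcover : ∀ i : Fin N, ∃ k ≤ L, i ∈ T k)
    (horder : ∀ k : ℕ, 1 ≤ k → ∀ i ∈ T (k + 1), ∀ j ∈ T k, |h i| ≤ |h j|) :
    ∑ k ∈ Finset.Icc 2 L, Real.sqrt (∑ i ∈ T k, h i ^ 2)
      ≤ Real.sqrt (∑ i ∈ T 0 ∪ T 1, h i ^ 2)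
        + 2 * ((K : ℝ) ^ (-(1 / 2) : ℝ) * ∑ i ∈ (T 0)ᶜ, |x i|) := by
  have hKpos : (0:ℝ) < K := by exact_mod_cast hK
  have hsK : (0:ℝ) < Real.sqrt K := Real.sqrt_pos.2 hKpos
  -- rewrite the rpow
  have hrpow : (K : ℝ) ^ (-(1 / 2) : ℝ) = (Real.sqrt K)⁻¹ := by
    rw [Real.rpow_neg hKpos.le, Real.sqrt_eq_rpow]
  -- cone constraint
  have hcone : ∑ i ∈ (T 0)ᶜ, |h i| ≤ ∑ i ∈ T 0, |h i| + 2 * ∑ i ∈ (T 0)ᶜ, |x i| := by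
    have hsplit : ∀ f : Fin N → ℝ, ∑ i, f i = ∑ i ∈ T 0, f i + ∑ i ∈ (T 0)ᶜ, f i := by
      intro f; rw [Finset.sum_add_sum_compl]
    have h1 : ∑ i ∈ T 0, (|x i| - |h i|) ≤ ∑ i ∈ T 0, |x i + h i| :=
      Finset.sum_le_sum fun i _ => by
        have := abs_add_le (x i + h i) (-h i); simp at this; linarith [this]
    have h2 : ∑ i ∈ (T 0)ᶜ, (|h i| - |x i|) ≤ ∑ i ∈ (T 0)ᶜ, |x i + h i| :=
      Finset.sum_le_sum fun i _ => by
        have := abs_add_le (x i + h i) (-x i); simp at this; linarith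
    rw [hsplit (fun i => |x i + h i|), hsplit (fun i => |x i|)] at hl1
    rw [Finset.sum_sub_distrib] at h1 h2
    linarith
  -- T₀ᶜ as disjoint union of T k, 1 ≤ k ≤ L
  have hunion : ∑ k ∈ Finset.Icc 1 L, ∑ i ∈ T k, |h i| = ∑ i ∈ (T 0)ᶜ, |h i| := by
    rw [← Finset.sum_biUnion]
    · congr 1
      ext i
      simp only [Finset.mem_biUnion, Finset.mem_Icc, Finset.mem_compl]
      constructor
      · rintro ⟨k, ⟨hk1, _⟩, hik⟩
        exact fun hi0 => Finset.disjoint_left.1 (hdisj 0 k (by omega)) hi0 hik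
      · intro hi0
        obtain ⟨k, hkL, hik⟩ := hcover i
        have hk1 : 1 ≤ k := by
          rcases Nat.eq_zero_or_pos k with rfl | h; · exact absurd hik hi0
          · exact h
        exact ⟨k, ⟨hk1, hkL⟩, hik⟩
    · intro a _ b _ hab
      exact hdisj a b hab
  -- per-block shelling bound
  have hshell : ∀ k ∈ Finset.Icc 2 L,
      Real.sqrt (∑ i ∈ T k, h i ^ 2) ≤ (Real.sqrt K)⁻¹ * ∑ i ∈ T (k - 1), |h i| := by
    intro k hk
    rw [Finset.mem_Icc] at hk
    set S := ∑ i ∈ T (k - 1), |h i| with hS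
    have hSnn : 0 ≤ S := Finset.sum_nonneg fun i _ => abs_nonneg _
    have hcardk1 : (T (k - 1)).card = K := hcard _ (by omega) (by omega)
    -- each |h i| for i ∈ T k is ≤ S / K
    have hle : ∀ i ∈ T k, |h i| ≤ S / K := by
      intro i hi
      have hk' : k - 1 + 1 = k := by omega
      have hord := horder (k - 1) (by omega)
      rw [hk'] at hord
      have : (K : ℝ) * |h i| ≤ S := by
        calc (K : ℝ) * |h i| = ∑ _j ∈ T (k - 1), |h i| := by
              rw [Finset.sum_const, hcardk1, nsmul_eq_mul]
          _ ≤ S := Finset.sum_le_sum fun j hj => hord i hi j hj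
      rw [le_div_iff₀ hKpos]; linarith
    have hsum : ∑ i ∈ T k, h i ^ 2 ≤ K * (S / K) ^ 2 := by
      calc ∑ i ∈ T k, h i ^ 2 ≤ ∑ _i ∈ T k, (S / K) ^ 2 := by
            refine Finset.sum_le_sum fun i hi => ?_
            rw [← sq_abs]
            exact pow_le_pow_left₀ (abs_nonneg _) (hle i hi) 2
        _ = (T k).card * (S / K) ^ 2 := by rw [Finset.sum_const, nsmul_eq_mul]
        _ ≤ K * (S / K) ^ 2 := by
            have : (T k).card = K := hcard k (by omega) hk.2
            rw [this]
    calc Real.sqrt (∑ i ∈ T k, h i ^ 2) ≤ Real.sqrt ((K : ℝ) * (S / K) ^ 2) :=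
          Real.sqrt_le_sqrt hsum
      _ = Real.sqrt K * (S / K) := by
          rw [Real.sqrt_mul hKpos.le, Real.sqrt_sq (by positivity)]
      _ = (Real.sqrt K)⁻¹ * S := by
          rw [eq_inv_mul_iff_mul_eq₀ (ne_of_gt hsK), ← mul_assoc,
            Real.mul_self_sqrt hKpos.le]
          field_simp
  -- sum of the ℓ¹ norms over shifted indices
  have hnn : ∀ k, 0 ≤ ∑ i ∈ T k, |h i| := fun k => Finset.sum_nonneg fun i _ => abs_nonneg _
  have hshift : ∑ k ∈ Finset.Icc 2 L, ∑ i ∈ T (k - 1), |h i|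
      ≤ ∑ k ∈ Finset.Icc 1 L, ∑ i ∈ T k, |h i| := by
    have himg : ∑ j ∈ (Finset.Icc 2 L).image (· - 1), ∑ i ∈ T j, |h i|
        = ∑ k ∈ Finset.Icc 2 L, ∑ i ∈ T (k - 1), |h i| :=
      Finset.sum_image (fun a ha b hb hab => by
        simp only [Finset.mem_coe, Finset.coe_Icc, Set.mem_Icc, Finset.mem_Icc] at ha hb; omega)
    rw [← himg]
    refine Finset.sum_le_sum_of_subset_of_nonneg ?_ fun j _ _ => hnn j
    intro j hj
    simp only [Finset.mem_image, Finset.mem_Icc] at hj ⊢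
    obtain ⟨a, ⟨ha2, haL⟩, rfl⟩ := hj
    omega
  -- Cauchy–Schwarz on T 0
  have hcs : ∑ i ∈ T 0, |h i| ≤ Real.sqrt K * Real.sqrt (∑ i ∈ T 0, h i ^ 2) := by
    have hsq : (∑ i ∈ T 0, |h i|) ^ 2 ≤ (K : ℝ) * ∑ i ∈ T 0, h i ^ 2 := by
      have := sq_sum_le_card_mul_sum_sq (s := T 0) (f := fun i => |h i|)
      simp only [sq_abs] at this
      rwa [hT0card] at this
    calc ∑ i ∈ T 0, |h i| = Real.sqrt ((∑ i ∈ T 0, |h i|) ^ 2) :=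
          (Real.sqrt_sq (hnn 0)).symm
      _ ≤ Real.sqrt ((K : ℝ) * ∑ i ∈ T 0, h i ^ 2) := Real.sqrt_le_sqrt hsq
      _ = Real.sqrt K * Real.sqrt (∑ i ∈ T 0, h i ^ 2) := by
          rw [Real.sqrt_mul hKpos.le]
  have hsub : Real.sqrt (∑ i ∈ T 0, h i ^ 2) ≤ Real.sqrt (∑ i ∈ T 0 ∪ T 1, h i ^ 2) :=
    Real.sqrt_le_sqrt (Finset.sum_le_sum_of_subset_of_nonneg Finset.subset_union_left
      fun i _ _ => sq_nonneg _)
  -- assemble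
  calc ∑ k ∈ Finset.Icc 2 L, Real.sqrt (∑ i ∈ T k, h i ^ 2)
      ≤ ∑ k ∈ Finset.Icc 2 L, (Real.sqrt K)⁻¹ * ∑ i ∈ T (k - 1), |h i| :=
        Finset.sum_le_sum hshell
    _ = (Real.sqrt K)⁻¹ * ∑ k ∈ Finset.Icc 2 L, ∑ i ∈ T (k - 1), |h i| := by
        rw [Finset.mul_sum]
    _ ≤ (Real.sqrt K)⁻¹ * ∑ i ∈ (T 0)ᶜ, |h i| := by
        rw [← hunion]
        exact mul_le_mul_of_nonneg_left hshift (by positivity)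
    _ ≤ (Real.sqrt K)⁻¹ * (∑ i ∈ T 0, |h i| + 2 * ∑ i ∈ (T 0)ᶜ, |x i|) :=
        mul_le_mul_of_nonneg_left hcone (by positivity)
    _ = (Real.sqrt K)⁻¹ * ∑ i ∈ T 0, |h i|
        + 2 * ((Real.sqrt K)⁻¹ * ∑ i ∈ (T 0)ᶜ, |x i|) := by ring
    _ ≤ Real.sqrt (∑ i ∈ T 0 ∪ T 1, h i ^ 2)
        + 2 * ((K : ℝ) ^ (-(1 / 2) : ℝ) * ∑ i ∈ (T 0)ᶜ, |x i|) := by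
        rw [hrpow]
        have h1 : (Real.sqrt K)⁻¹ * ∑ i ∈ T 0, |h i|
            ≤ Real.sqrt (∑ i ∈ T 0, h i ^ 2) := by
          rw [inv_mul_le_iff₀ hsK]
          exact hcs
        linarith [hsub]
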